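/- arXiv:2006.15859 — 4 statements merged into one kernel-verified Lean document; each statement's English description precedes it below -/
import Mathlib

section
/- Let S(x,y,z) be the space of formal series f ∈ T(x,y,z) annihilated by the four operators D₀ = x∂_x + y∂_y + z∂_z, D̄₀ = x̄∂_{x̄} + ȳ∂_{ȳ} + z̄∂_{z̄}, D₁ = x²∂_x + y²∂_y + z²∂_z, D̄₁ = x̄²∂_{x̄} + ȳ²∂_{ȳ} + z̄²∂_{z̄}. Then every f ∈ S(x,y,z) can be written f = Σ_{n,r∈ℤ_{≥0}} Σ_{m,s∈ℝ} a_{n,m,r,s}(y/x)ⁿ(z/y)^m(ȳ/x̄)^r(z̄/ȳ)^s, and the evaluation map v : S(x,y,z) → ℂ((p,p̄,|p|^ℝ)) sending f to Σ_{m,s} a_{0,m,0,s} p^m p̄^s (the formal limit (x,y,z) → (∞,1,p)) is a linear isomorphism, with inverse the substitution of the expansion of the cross-ratio. -/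
noncomputable section

/-!  **Statement 10.**  Formal series in `x, x̄, y, ȳ, z, z̄` (with real exponents) are
encoded by coefficient functions `a : ℝ⁶ → ℂ`, where `a ex exb ey eyb ez ezb` is the
coefficient of `x^ex x̄^exb y^ey ȳ^eyb z^ez z̄^ezb`. -/

/-- Membership in `T(x,y,z) =
`ℂ[[y/x, ȳ/x̄]]((z/y, z̄/ȳ, |z/y|^ℝ))[x^±, y^±, x̄^±, ȳ^±, |x|^ℝ, |y|^ℝ]`:
finitely many monomial offsets in `x, x̄, y, ȳ`, a power series in `y/x, ȳ/x̄`, and a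
`z/y, z̄/ȳ`-series with exponents bounded below, integral holomorphic/antiholomorphic
difference, and countable support. -/
def MemT3 (a : ℝ → ℝ → ℝ → ℝ → ℝ → ℝ → ℂ) : Prop :=
  (∃ T : Finset (ℝ × ℝ × ℝ × ℝ), ∀ ex exb ey eyb ez ezb : ℝ,
    a ex exb ey eyb ez ezb ≠ 0 →
      ∃ σ ∈ T, ∃ k l : ℕ, ex = σ.1 - k ∧ exb = σ.2.1 - l ∧
        ey = σ.2.2.1 + k - ez ∧ eyb = σ.2.2.2 + l - ezb) ∧
  (∃ N : ℝ, ∀ ex exb ey eyb ez ezb : ℝ, a ex exb ey eyb ez ezb ≠ 0 →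
    N ≤ ez ∧ N ≤ ezb) ∧
  (∀ ex exb ey eyb ez ezb : ℝ, a ex exb ey eyb ez ezb ≠ 0 →
    ∃ m : ℤ, ez - ezb = (m : ℝ)) ∧
  Set.Countable {e : (ℝ × ℝ) × (ℝ × ℝ) × ℝ × ℝ |
    a e.1.1 e.1.2 e.2.1.1 e.2.1.2 e.2.2.1 e.2.2.2 ≠ 0}

/-- Membership in `S(x,y,z)`: an element of `T(x,y,z)` annihilated by
`D₀ = x∂_x + y∂_y + z∂_z`, `D̄₀`, `D₁ = x²∂_x + y²∂_y + z²∂_z` and `D̄₁`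
(expressed on coefficients). -/
def MemS3 (a : ℝ → ℝ → ℝ → ℝ → ℝ → ℝ → ℂ) : Prop :=
  MemT3 a ∧
  (∀ ex exb ey eyb ez ezb : ℝ,
    ((ex + ey + ez : ℝ) : ℂ) * a ex exb ey eyb ez ezb = 0) ∧
  (∀ ex exb ey eyb ez ezb : ℝ,
    ((exb + eyb + ezb : ℝ) : ℂ) * a ex exb ey eyb ez ezb = 0) ∧
  (∀ ex exb ey eyb ez ezb : ℝ,
    ((ex - 1 : ℝ) : ℂ) * a (ex - 1) exb ey eyb ez ezb +
      ((ey - 1 : ℝ) : ℂ) * a ex exb (ey - 1) eyb ez ezb +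
      ((ez - 1 : ℝ) : ℂ) * a ex exb ey eyb (ez - 1) ezb = 0) ∧
  (∀ ex exb ey eyb ez ezb : ℝ,
    ((exb - 1 : ℝ) : ℂ) * a ex (exb - 1) ey eyb ez ezb +
      ((eyb - 1 : ℝ) : ℂ) * a ex exb ey (eyb - 1) ez ezb +
      ((ezb - 1 : ℝ) : ℂ) * a ex exb ey eyb ez (ezb - 1) = 0)

/-- Membership in `ℂ((p, p̄, |p|^ℝ))`. -/
def MemC (c : ℝ → ℝ → ℂ) : Prop :=
  (∀ r s : ℝ, c r s ≠ 0 → ∃ m : ℤ, r - s = (m : ℝ)) ∧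
  Set.Countable {p : ℝ × ℝ | c p.1 p.2 ≠ 0} ∧
  ∃ N : ℝ, ∀ r s : ℝ, c r s ≠ 0 → N ≤ r ∧ N ≤ s

/-- The evaluation map `v : S(x,y,z) → ℂ((p,p̄,|p|^ℝ))`: the formal limit
`(x,y,z) → (∞,1,p)`, i.e. the `(y/x)⁰(ȳ/x̄)⁰` part, read off in the variables
`p = z/y`, `p̄ = z̄/ȳ`. -/
def evalS3 (a : ℝ → ℝ → ℝ → ℝ → ℝ → ℝ → ℂ) : ℝ → ℝ → ℂ :=
  fun m s => a 0 0 (-m) (-s) m s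

/-!
`D₀` forces `x + y + z = 0` on the support, and `D₁` lets a nonzero coefficient at an
`x`-exponent `t ≠ 0` climb to `t + 1`; since the `x`-exponents are bounded above they lie in
`-ℕ`, and likewise for `x̄`. So `f = Σ_{n,r} Σ_{m,s} a_{n,r}(m,s) (y/x)ⁿ (z/y)ᵐ (ȳ/x̄)ʳ (z̄/ȳ)ˢ`,
and `D₁`, `D̄₁` become the recursions
`(n + 1) a_{n+1} (m) = (n - m) a_n(m) + (m - 1) a_n(m - 1)` in each of the two sides, with
the leading coefficient `n + 1 ≠ 0`. Hence `a_{n,r}` is determined by `a_{0,0} = v f`; conversely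
the recursion started from any `c ∈ ℂ((p,p̄,|p|^ℝ))` defines an element of `S` with value `c`.
The two recursions act on different variables, so they commute. -/

section OneSide

variable {f : ℝ → ℝ → ℝ → ℂ} {H : ℕ → ℝ → ℂ} {x y z : ℝ}

def D0Null (f : ℝ → ℝ → ℝ → ℂ) : Prop :=
  ∀ x y z : ℝ, ((x + y + z : ℝ) : ℂ) * f x y z = 0

/-- `x²∂_x + y²∂_y + z²∂_z` kills `Σ f x y z xˣ yʸ zᶻ`, read off coefficientwise. -/
def D1Null (f : ℝ → ℝ → ℝ → ℂ) : Prop :=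
  ∀ x y z : ℝ, ((x - 1 : ℝ) : ℂ) * f (x - 1) y z + ((y - 1 : ℝ) : ℂ) * f x (y - 1) z +
    ((z - 1 : ℝ) : ℂ) * f x y (z - 1) = 0

def D1Rec (H : ℕ → ℝ → ℂ) : Prop :=
  ∀ (n : ℕ) (e : ℝ), (n + 1 : ℂ) * H (n + 1) e = (n - e : ℂ) * H n e + (e - 1 : ℂ) * H n (e - 1)

lemma D0Null.add_eq_zero (hf : D0Null f) (h : f x y z ≠ 0) : x + y + z = 0 := by
  exact_mod_cast (mul_eq_zero.1 (hf x y z)).resolve_right h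

lemma exists_eq_neg_natCast_of_bddAbove {S : Set ℝ} (hS : BddAbove S)
    (hstep : ∀ t ∈ S, t ≠ 0 → t + 1 ∈ S) {t : ℝ} (ht : t ∈ S) : ∃ n : ℕ, t = -n := by
  obtain ⟨M, hM⟩ := hS
  suffices ∀ k : ℕ, ∀ t ∈ S, M - t ≤ k → ∃ n : ℕ, t = -n from this _ t ht (Nat.le_ceil _)
  intro k
  induction k with
  | zero =>
    intro t ht hk
    by_contra hne
    have := hM (hstep t ht fun h => hne ⟨0, by simp [h]⟩)
    push_cast at hk
    linarith
  | succ k ih =>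
    intro t ht hk
    by_cases h0 : t = 0
    · exact ⟨0, by simp [h0]⟩
    obtain ⟨n, hn⟩ := ih (t + 1) (hstep t ht h0) (by push_cast at hk; linarith)
    exact ⟨n + 1, by push_cast; linarith⟩

lemma D1Null.exists_eq_neg_natCast (hf : D1Null f) (hbdd : BddAbove {x | ∃ y z, f x y z ≠ 0})
    (h : f x y z ≠ 0) : ∃ n : ℕ, x = -n := by
  refine exists_eq_neg_natCast_of_bddAbove hbdd ?_ ⟨y, z, h⟩
  rintro t ⟨y, z, ht⟩ ht0
  by_contra hup
  simp only [Set.mem_ofPred_eq, not_exists, not_not] at hup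
  have := hf (t + 1) y z
  rw [add_sub_cancel_right, hup, hup, mul_zero, mul_zero, add_zero, add_zero] at this
  exact ht ((mul_eq_zero.1 this).resolve_left (by exact_mod_cast ht0))

open Classical in
/-- The coefficient of `x^x y^y z^z` in `Σ_{n ∈ ℕ} Σ_e H n e (y/x)ⁿ (z/y)ᵉ`. -/
def levelSeries (H : ℕ → ℝ → ℂ) (x y z : ℝ) : ℂ :=
  if (∃ n : ℕ, x = -n) ∧ x + y + z = 0 then H ⌊-x⌋₊ z else 0

lemma levelSeries_neg_natCast (H : ℕ → ℝ → ℂ) (n : ℕ) (h : -(n : ℝ) + y + z = 0) :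
    levelSeries H (-n) y z = H n z := by
  rw [levelSeries, if_pos ⟨⟨n, rfl⟩, h⟩, neg_neg, Nat.floor_natCast]

lemma levelSeries_of_not (h : ¬((∃ n : ℕ, x = -n) ∧ x + y + z = 0)) :
    levelSeries H x y z = 0 :=
  if_neg h

lemma levelSeries_of_add_ne_zero (h : x + y + z ≠ 0) : levelSeries H x y z = 0 :=
  levelSeries_of_not fun h' => h h'.2

lemma levelSeries_of_forall_ne (h : ∀ n : ℕ, x ≠ -n) : levelSeries H x y z = 0 :=
  levelSeries_of_not fun ⟨⟨n, hn⟩, _⟩ => h n hn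

lemma exists_of_levelSeries_ne_zero (h : levelSeries H x y z ≠ 0) :
    ∃ n : ℕ, x = -n ∧ y = n - z ∧ H n z ≠ 0 := by
  by_contra hc
  refine h (levelSeries_of_not ?_)
  rintro ⟨⟨n, rfl⟩, hs⟩
  rw [levelSeries_neg_natCast H n hs] at h
  exact hc ⟨n, rfl, by linarith, h⟩

lemma d0Null_levelSeries (H : ℕ → ℝ → ℂ) : D0Null (levelSeries H) := by
  intro x y z
  by_cases h : levelSeries H x y z = 0
  · rw [h, mul_zero]
  · obtain ⟨n, rfl, rfl, -⟩ := exists_of_levelSeries_ne_zero h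
    rw [show -(n : ℝ) + (n - z) + z = 0 by ring, Complex.ofReal_zero, zero_mul]

lemma D1Rec.d1Null_levelSeries (hH : D1Rec H) : D1Null (levelSeries H) := by
  intro x y z
  by_cases hs : x + y + z = 1
  swap
  · rw [levelSeries_of_add_ne_zero, levelSeries_of_add_ne_zero, levelSeries_of_add_ne_zero]
    · simp
    all_goals intro h; apply hs; linarith
  by_cases hx : ∃ n : ℕ, x = -n
  · obtain ⟨n, rfl⟩ := hx
    obtain rfl : y = n + 1 - z := by linarith
    rw [show -(n : ℝ) - 1 = -((n + 1 : ℕ) : ℝ) by push_cast; ring,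
      levelSeries_neg_natCast _ _ (by push_cast; ring), levelSeries_neg_natCast _ _ (by ring),
      levelSeries_neg_natCast _ _ (by ring)]
    push_cast
    linear_combination -hH n z
  push Not at hx
  rw [levelSeries_of_forall_ne hx, levelSeries_of_forall_ne hx]
  by_cases h1 : x = 1
  · simp [h1]
  rw [levelSeries_of_forall_ne]
  · simp
  rintro (_ | k) hk
  · exact h1 (by simpa [sub_eq_zero] using hk)
  · exact hx k (by push_cast at hk; linarith)

lemma eq_levelSeries (hf : ∀ x y z, f x y z ≠ 0 → ∃ n : ℕ, x = -n ∧ y = n - z) (x y z : ℝ) :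
    f x y z = levelSeries (fun n z => f (-n) (n - z) z) x y z := by
  by_cases h : f x y z = 0
  · rw [h, eq_comm]
    by_contra hne
    obtain ⟨n, rfl, rfl, hn⟩ := exists_of_levelSeries_ne_zero hne
    exact hn h
  · obtain ⟨n, rfl, rfl⟩ := hf x y z h
    rw [levelSeries_neg_natCast _ _ (by ring)]

lemma D1Null.d1Rec (hf : D1Null f) : D1Rec fun n z => f (-n) (n - z) z := by
  intro n z
  have h := hf (-n) (n + 1 - z) z
  rw [show -(n : ℝ) - 1 = -(n + 1) by ring, show (n : ℝ) + 1 - z - 1 = n - z by ring] at h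
  simp only
  rw [show (n : ℝ) - (z - 1) = n + 1 - z by ring]
  push_cast at h ⊢
  linear_combination -h

end OneSide

section Levels

def stepOp (n : ℕ) : Module.End ℂ (ℝ → ℂ) where
  toFun g e := ((n - e : ℂ) * g e + (e - 1 : ℂ) * g (e - 1)) / (n + 1)
  map_add' f g := by ext e; simp only [Pi.add_apply]; ring
  map_smul' a g := by ext e; simp only [Pi.smul_apply, smul_eq_mul, RingHom.id_apply]; ring

def levelOp : ℕ → Module.End ℂ (ℝ → ℂ)
  | 0 => 1
  | n + 1 => stepOp n * levelOp n

lemma levelOp_succ_apply (n : ℕ) (g : ℝ → ℂ) (e : ℝ) :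
    levelOp (n + 1) g e =
      ((n - e : ℂ) * levelOp n g e + (e - 1 : ℂ) * levelOp n g (e - 1)) / (n + 1) :=
  rfl

lemma d1Rec_levelOp (g : ℝ → ℂ) : D1Rec fun n => levelOp n g := fun n e => by
  beta_reduce
  rw [levelOp_succ_apply, mul_div_cancel₀ _ (Nat.cast_add_one_ne_zero n)]

lemma D1Rec.eq_levelOp {H : ℕ → ℝ → ℂ} (hH : D1Rec H) (n : ℕ) : H n = levelOp n (H 0) := by
  induction n with
  | zero => rfl
  | succ n ih =>
    funext e
    rw [levelOp_succ_apply, ← ih, eq_div_iff (Nat.cast_add_one_ne_zero n), mul_comm, hH]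

lemma levelOp_apply_eq_zero {g : ℝ → ℂ} {e : ℝ} (h : ∀ j : ℕ, g (e - j) = 0) (n : ℕ) :
    levelOp n g e = 0 := by
  induction n generalizing e with
  | zero => simpa [levelOp] using h 0
  | succ n ih =>
    rw [levelOp_succ_apply, ih h, ih fun j => by simpa [sub_sub, add_comm] using h (j + 1)]
    simp

def crossCoeff (c : ℝ → ℝ → ℂ) (n r : ℕ) (m s : ℝ) : ℂ :=
  levelOp n (fun t => levelOp r (c t) s) m

lemma d1Rec_crossCoeff_left (c : ℝ → ℝ → ℂ) (r : ℕ) (s : ℝ) :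
    D1Rec fun n m => crossCoeff c n r m s :=
  d1Rec_levelOp _

lemma d1Rec_crossCoeff_right (c : ℝ → ℝ → ℂ) (n : ℕ) (m : ℝ) :
    D1Rec fun r s => crossCoeff c n r m s := by
  intro r s
  have hsplit : (fun t => levelOp (r + 1) (c t) s) =
      ((r - s : ℂ) / (r + 1)) • (fun t => levelOp r (c t) s) +
        ((s - 1 : ℂ) / (r + 1)) • (fun t => levelOp r (c t) (s - 1)) := by
    funext t
    simp only [levelOp_succ_apply, Pi.add_apply, Pi.smul_apply, smul_eq_mul]
    ring
  simp only [crossCoeff, hsplit, map_add, map_smul, Pi.add_apply, Pi.smul_apply, smul_eq_mul]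
  field_simp [Nat.cast_add_one_ne_zero r]

lemma crossCoeff_zero_zero (c : ℝ → ℝ → ℂ) : crossCoeff c 0 0 = c :=
  rfl

lemma crossCoeff_eq_zero {c : ℝ → ℝ → ℂ} {m s : ℝ}
    (h : ∀ j l : ℕ, c (m - j) (s - l) = 0) (n r : ℕ) : crossCoeff c n r m s = 0 :=
  levelOp_apply_eq_zero (fun j => levelOp_apply_eq_zero (h j) r) n

lemma D1Rec.eq_crossCoeff {B : ℕ → ℕ → ℝ → ℝ → ℂ} (hl : ∀ r s, D1Rec fun n m => B n r m s)
    (hr : ∀ m, D1Rec fun r s => B 0 r m s) (n r : ℕ) (m s : ℝ) :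
    B n r m s = crossCoeff (B 0 0) n r m s := by
  rw [crossCoeff, congrFun ((hl r s).eq_levelOp n) m]
  refine congrFun (congrArg _ (funext fun t => ?_)) m
  exact congrFun ((hr t).eq_levelOp r) s

end Levels

section TwoSided

variable {a : ℝ → ℝ → ℝ → ℝ → ℝ → ℝ → ℂ}

lemma MemT3.exists_bound (ha : MemT3 a) : ∃ M : ℝ, ∀ ex exb ey eyb ez ezb : ℝ,
    a ex exb ey eyb ez ezb ≠ 0 → ex ≤ M ∧ exb ≤ M := by
  obtain ⟨⟨T, hT⟩, -⟩ := ha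
  obtain ⟨M, hM⟩ := (T.image fun σ => max σ.1 σ.2.1).exists_le
  refine ⟨M, fun ex exb ey eyb ez ezb h => ?_⟩
  obtain ⟨σ, hσ, k, l, rfl, rfl, -, -⟩ := hT ex exb ey eyb ez ezb h
  have hσM := hM _ (Finset.mem_image_of_mem _ hσ)
  exact ⟨(sub_le_self _ k.cast_nonneg).trans ((le_max_left _ _).trans hσM),
    (sub_le_self _ l.cast_nonneg).trans ((le_max_right _ _).trans hσM)⟩

lemma MemS3.exists_of_ne_zero (ha : MemS3 a) {ex exb ey eyb ez ezb : ℝ}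
    (h : a ex exb ey eyb ez ezb ≠ 0) :
    ∃ n r : ℕ, ex = -n ∧ exb = -r ∧ ey = n - ez ∧ eyb = r - ezb := by
  obtain ⟨hT, hD0, hD0b, hD1, hD1b⟩ := ha
  obtain ⟨M, hM⟩ := hT.exists_bound
  obtain ⟨n, hn⟩ := D1Null.exists_eq_neg_natCast (f := fun ex ey ez => a ex exb ey eyb ez ezb)
    (fun ex ey ez => hD1 ex exb ey eyb ez ezb)
    ⟨M, fun ex ⟨ey, ez, h⟩ => (hM _ _ _ _ _ _ h).1⟩ h
  obtain ⟨r, hr⟩ := D1Null.exists_eq_neg_natCast (f := fun exb eyb ezb => a ex exb ey eyb ez ezb)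
    (fun exb eyb ezb => hD1b ex exb ey eyb ez ezb)
    ⟨M, fun exb ⟨eyb, ezb, h⟩ => (hM _ _ _ _ _ _ h).2⟩ h
  have hs := D0Null.add_eq_zero (f := fun ex ey ez => a ex exb ey eyb ez ezb)
    (fun ex ey ez => hD0 ex exb ey eyb ez ezb) h
  have hsb := D0Null.add_eq_zero (f := fun exb eyb ezb => a ex exb ey eyb ez ezb)
    (fun exb eyb ezb => hD0b ex exb ey eyb ez ezb) h
  exact ⟨n, r, hn, hr, by linarith, by linarith⟩

lemma MemT3.memC_evalS3 (ha : MemT3 a) : MemC (evalS3 a) := by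
  obtain ⟨-, ⟨N, hN⟩, hint, hcnt⟩ := ha
  refine ⟨fun m s => hint 0 0 (-m) (-s) m s, ?_, N, fun m s => hN 0 0 (-m) (-s) m s⟩
  refine hcnt.preimage (f := fun p : ℝ × ℝ => ((0, 0), (-p.1, -p.2), p.1, p.2)) ?_
  intro p q h
  simp only [Prod.mk.injEq] at h
  exact Prod.ext h.2.2.1 h.2.2.2

lemma eq_levelSeries_levelSeries
    (h : ∀ ex exb ey eyb ez ezb : ℝ, a ex exb ey eyb ez ezb ≠ 0 →
      ∃ n r : ℕ, ex = -n ∧ exb = -r ∧ ey = n - ez ∧ eyb = r - ezb)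
    (ex exb ey eyb ez ezb : ℝ) :
    a ex exb ey eyb ez ezb = levelSeries (fun n ez => levelSeries
      (fun r ezb => a (-n) (-r) (n - ez) (r - ezb) ez ezb) exb eyb ezb) ex ey ez := by
  rw [eq_levelSeries (f := fun ex ey ez => a ex exb ey eyb ez ezb)]
  · congr 1
    funext n ez
    refine eq_levelSeries (f := fun exb eyb ezb => a (-n) exb (n - ez) eyb ez ezb) ?_ _ _ _
    intro exb eyb ezb hne
    obtain ⟨-, r, -, hr, -, hr'⟩ := h _ _ _ _ _ _ hne
    exact ⟨r, hr, hr'⟩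
  · intro ex ey ez hne
    obtain ⟨n, -, hn, -, hn', -⟩ := h _ _ _ _ _ _ hne
    exact ⟨n, hn, hn'⟩

lemma levelSeries_comm (F : ℕ → ℕ → ℝ → ℝ → ℂ) (ex exb ey eyb ez ezb : ℝ) :
    levelSeries (fun n ez => levelSeries (fun r ezb => F n r ez ezb) exb eyb ezb) ex ey ez =
      levelSeries (fun r ezb => levelSeries (fun n ez => F n r ez ezb) ex ey ez) exb eyb ezb := by
  simp only [levelSeries]
  split_ifs <;> rfl

lemma d1Rec_levelSeries {F : ℕ → ℕ → ℝ → ℝ → ℂ} (hF : ∀ r s, D1Rec fun n m => F n r m s)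
    (x y z : ℝ) : D1Rec fun n m => levelSeries (fun r s => F n r m s) x y z := by
  intro n m
  simp only [levelSeries]
  split_ifs
  · exact hF _ _ n m
  · simp

/-- The substitution map `s`. Rather than expanding `pᵐ p̄ˢ` explicitly, its coefficients are
generated from `c` by the recursions of `D₁` and `D̄₁`; by `MemS3.eq_crossRatioSubst` this is
the only element of `S` with value `c`. -/
def crossRatioSubst (c : ℝ → ℝ → ℂ) (ex exb ey eyb ez ezb : ℝ) : ℂ :=
  levelSeries (fun n ez => levelSeries (fun r ezb => crossCoeff c n r ez ezb) exb eyb ezb) ex ey ez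

lemma MemS3.eq_crossRatioSubst (ha : MemS3 a) : a = crossRatioSubst (evalS3 a) := by
  funext ex exb ey eyb ez ezb
  rw [eq_levelSeries_levelSeries (fun _ _ _ _ _ _ h => ha.exists_of_ne_zero h)]
  obtain ⟨-, -, -, hD1, hD1b⟩ := ha
  have hB := D1Rec.eq_crossCoeff (B := fun n r m s => a (-n) (-r) (n - m) (r - s) m s)
    (fun r s => D1Null.d1Rec (f := fun ex ey ez => a ex (-r) ey (r - s) ez s)
      fun ex ey ez => hD1 ex (-r) ey (r - s) ez s)
    (fun m => D1Null.d1Rec (f := fun exb eyb ezb => a (-(0 : ℕ)) exb ((0 : ℕ) - m) eyb m ezb)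
      fun exb eyb ezb => hD1b _ exb _ eyb m ezb)
  have hB0 : (fun m s => a (-(0 : ℕ)) (-(0 : ℕ)) ((0 : ℕ) - m) ((0 : ℕ) - s) m s) = evalS3 a := by
    funext m s
    simp [evalS3]
  rw [hB0] at hB
  simp only [hB, crossRatioSubst]

lemma exists_of_crossRatioSubst_ne_zero {c : ℝ → ℝ → ℂ} {ex exb ey eyb ez ezb : ℝ}
    (h : crossRatioSubst c ex exb ey eyb ez ezb ≠ 0) :
    ∃ n r j l : ℕ, ex = -n ∧ exb = -r ∧ ey = n - ez ∧ eyb = r - ezb ∧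
      c (ez - j) (ezb - l) ≠ 0 := by
  obtain ⟨n, rfl, rfl, hn⟩ := exists_of_levelSeries_ne_zero h
  obtain ⟨r, rfl, rfl, hnr⟩ := exists_of_levelSeries_ne_zero hn
  obtain ⟨j, l, hjl⟩ : ∃ j l : ℕ, c (ez - j) (ezb - l) ≠ 0 := by
    by_contra hc
    push Not at hc
    exact hnr (crossCoeff_eq_zero hc n r)
  exact ⟨n, r, j, l, rfl, rfl, rfl, rfl, hjl⟩

lemma crossRatioSubst_eq_levelSeries_right (c : ℝ → ℝ → ℂ) (ex exb ey eyb ez ezb : ℝ) :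
    crossRatioSubst c ex exb ey eyb ez ezb = levelSeries
      (fun r ezb => levelSeries (fun n ez => crossCoeff c n r ez ezb) ex ey ez) exb eyb ezb :=
  levelSeries_comm _ _ _ _ _ _ _

lemma crossRatioSubst_support_subset (c : ℝ → ℝ → ℂ) :
    {e : (ℝ × ℝ) × (ℝ × ℝ) × ℝ × ℝ |
        crossRatioSubst c e.1.1 e.1.2 e.2.1.1 e.2.1.2 e.2.2.1 e.2.2.2 ≠ 0} ⊆
      ⋃ q : ℕ × ℕ × ℕ × ℕ, (fun p : ℝ × ℝ =>
        (((-q.1 : ℝ), (-q.2.1 : ℝ)), ((q.1 - (p.1 + q.2.2.1) : ℝ), (q.2.1 - (p.2 + q.2.2.2) : ℝ)),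
          p.1 + q.2.2.1, p.2 + q.2.2.2)) '' {p : ℝ × ℝ | c p.1 p.2 ≠ 0} := by
  rintro ⟨⟨ex, exb⟩, ⟨ey, eyb⟩, ez, ezb⟩ (he : crossRatioSubst c ex exb ey eyb ez ezb ≠ 0)
  obtain ⟨n, r, j, l, rfl, rfl, rfl, rfl, hjl⟩ := exists_of_crossRatioSubst_ne_zero he
  refine Set.mem_iUnion.2 ⟨(n, r, j, l), (ez - j, ezb - l), hjl, ?_⟩
  simp

lemma memS3_crossRatioSubst {c : ℝ → ℝ → ℂ} (hc : MemC c) : MemS3 (crossRatioSubst c) := by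
  obtain ⟨hint, hcnt, N, hN⟩ := hc
  refine ⟨⟨⟨{(0, 0, 0, 0)}, ?_⟩, ⟨N, ?_⟩, ?_, ?_⟩, ?_, ?_, ?_, ?_⟩
  · intro ex exb ey eyb ez ezb h
    obtain ⟨n, r, -, -, rfl, rfl, rfl, rfl, -⟩ := exists_of_crossRatioSubst_ne_zero h
    exact ⟨_, Finset.mem_singleton_self _, n, r, by simp, by simp, by ring, by ring⟩
  · intro ex exb ey eyb ez ezb h
    obtain ⟨-, -, j, l, -, -, -, -, hjl⟩ := exists_of_crossRatioSubst_ne_zero h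
    obtain ⟨hj, hl⟩ := hN _ _ hjl
    exact ⟨by linarith [Nat.cast_nonneg (α := ℝ) j], by linarith [Nat.cast_nonneg (α := ℝ) l]⟩
  · intro ex exb ey eyb ez ezb h
    obtain ⟨-, -, j, l, -, -, -, -, hjl⟩ := exists_of_crossRatioSubst_ne_zero h
    obtain ⟨m, hm⟩ := hint _ _ hjl
    exact ⟨m + j - l, by push_cast; linarith⟩
  · exact (Set.countable_iUnion fun _ => hcnt.image _).mono (crossRatioSubst_support_subset c)
  · exact fun ex exb ey eyb ez ezb => d0Null_levelSeries _ ex ey ez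
  · intro ex exb ey eyb ez ezb
    rw [crossRatioSubst_eq_levelSeries_right]
    exact d0Null_levelSeries _ exb eyb ezb
  · exact fun ex exb ey eyb ez ezb =>
      (d1Rec_levelSeries (d1Rec_crossCoeff_left c) exb eyb ezb).d1Null_levelSeries ex ey ez
  · intro ex exb ey eyb ez ezb
    simp only [crossRatioSubst_eq_levelSeries_right]
    exact (d1Rec_levelSeries (d1Rec_crossCoeff_right c) ex ey ez).d1Null_levelSeries exb eyb ezb

lemma evalS3_crossRatioSubst (c : ℝ → ℝ → ℂ) : evalS3 (crossRatioSubst c) = c := by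
  funext m s
  simp [evalS3, crossRatioSubst, levelSeries, crossCoeff_zero_zero]

end TwoSided

/-- Every `f ∈ S(x,y,z)` can be written
`f = Σ_{n,r∈ℕ} Σ_{m,s∈ℝ} a_{n,m,r,s} (y/x)ⁿ (z/y)ᵐ (ȳ/x̄)ʳ (z̄/ȳ)ˢ`, and the evaluation
map `v : S(x,y,z) → ℂ((p,p̄,|p|^ℝ))` (the formal limit `(x,y,z) → (∞,1,p)`) is a linear
isomorphism; its inverse is the substitution of the expansion of the cross-ratio.
(The map `v` is literally coefficient extraction, hence linear; bijectivity is expressed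
by injectivity and surjectivity onto `ℂ((p,p̄,|p|^ℝ))`.) -/
theorem eval_S3_linear_iso :
    (∀ a, MemS3 a → ∀ ex exb ey eyb ez ezb : ℝ, a ex exb ey eyb ez ezb ≠ 0 →
      ∃ n r : ℕ, ex = -(n : ℝ) ∧ exb = -(r : ℝ) ∧
        ey = (n : ℝ) - ez ∧ eyb = (r : ℝ) - ezb) ∧
    (∀ a, MemS3 a → MemC (evalS3 a)) ∧
    (∀ a a', MemS3 a → MemS3 a' → evalS3 a = evalS3 a' → a = a') ∧
    (∀ c, MemC c → ∃ a, MemS3 a ∧ evalS3 a = c) := by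
  refine ⟨fun a ha _ _ _ _ _ _ h => ha.exists_of_ne_zero h, fun a ha => ha.1.memC_evalS3,
    fun a a' ha ha' h => ?_, fun c hc => ⟨_, memS3_crossRatioSubst hc, evalS3_crossRatioSubst c⟩⟩
  rw [ha.eq_crossRatioSubst, ha'.eq_crossRatioSubst, h]
end
end

section
/- Let S''(x,y) be the space of formal series f ∈ ℂ[[y/x, ȳ/x̄]][x^±, x̄^±, |x|^ℝ, y^±, ȳ^±, |y|^ℝ] annihilated by x∂_x + y∂_y, x̄∂_{x̄} + ȳ∂_{ȳ}, x²∂_x + y²∂_y, and x̄²∂_{x̄} + ȳ²∂_{ȳ}. Then S''(x,y) consists exactly of the constant series. -/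
/-!
The Euler operators force `s + t = 0` on the support. On that line the recurrence
`(s - 1) a(s - 1, t) + (t - 1) a(s, t - 1) = 0` coming from `x²∂_x + y²∂_y`, read at
`(s + 1, t)`, shows that a nonzero coefficient at `(s, t)` with `s ≠ 0` produces a nonzero
coefficient at `(s + 1, t - 1)`, again with `s + 1 = -(t - 1) ≠ 0`. Iterating pushes the support
to arbitrarily large `x`-exponents, which is impossible since the `x`-exponents of a series in
the space are bounded above. The same argument applies to the barred variables.
-/

noncomputable section

/-- `a s sb t tb` is the coefficient of `x^s x̄^sb y^t ȳ^tb`; `MemT2 a` is membership in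
`ℂ[[y/x, ȳ/x̄]][x^±, x̄^±, |x|^ℝ, y^±, ȳ^±, |y|^ℝ]`. -/
def MemT2 (a : ℝ → ℝ → ℝ → ℝ → ℂ) : Prop :=
  ∃ T : Finset (ℝ × ℝ × ℝ × ℝ), ∀ s sb t tb : ℝ, a s sb t tb ≠ 0 →
    ∃ σ ∈ T, ∃ k l : ℕ, s = σ.1 - k ∧ sb = σ.2.1 - l ∧
      t = σ.2.2.1 + k ∧ tb = σ.2.2.2 + l

theorem MemT2.exists_bound {a : ℝ → ℝ → ℝ → ℝ → ℂ} (h : MemT2 a) :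
    ∃ M : ℝ, ∀ s sb t tb : ℝ, a s sb t tb ≠ 0 → s ≤ M ∧ sb ≤ M := by
  obtain ⟨T, hT⟩ := h
  obtain ⟨M, hM⟩ := (T.image fun σ => max σ.1 σ.2.1).bddAbove
  refine ⟨M, fun s sb t tb hne => ?_⟩
  obtain ⟨σ, hσ, k, l, rfl, rfl, -, -⟩ := hT s sb t tb hne
  have hσM : max σ.1 σ.2.1 ≤ M := hM (Finset.mem_coe.2 (Finset.mem_image_of_mem _ hσ))
  have hk := k.cast_nonneg (α := ℝ)
  have hl := l.cast_nonneg (α := ℝ)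
  constructor <;> linarith [le_max_left σ.1 σ.2.1, le_max_right σ.1 σ.2.1]

section Recurrence

variable {b : ℝ → ℝ → ℂ}
  (hrec : ∀ s t : ℝ, ((s - 1 : ℝ) : ℂ) * b (s - 1) t + ((t - 1 : ℝ) : ℂ) * b s (t - 1) = 0)
include hrec

theorem ne_zero_shift_of_recurrence {s t : ℝ} (hst : s + t = 0) (hs : s ≠ 0)
    (hb : b s t ≠ 0) : b (s + 1) (t - 1) ≠ 0 ∧ s + 1 ≠ 0 := by
  have h := hrec (s + 1) t
  rw [add_sub_cancel_right] at h
  have hsecond : ((t - 1 : ℝ) : ℂ) * b (s + 1) (t - 1) ≠ 0 := by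
    rw [eq_neg_of_add_eq_zero_right h, neg_ne_zero]
    exact mul_ne_zero (Complex.ofReal_ne_zero.2 hs) hb
  obtain ⟨ht, hb'⟩ := mul_ne_zero_iff.mp hsecond
  refine ⟨hb', fun hs1 => Complex.ofReal_ne_zero.1 ht ?_⟩
  linarith

theorem ne_zero_shift_nat_of_recurrence {s t : ℝ} (hst : s + t = 0) (hs : s ≠ 0)
    (hb : b s t ≠ 0) (n : ℕ) : b (s + n) (t - n) ≠ 0 ∧ s + n ≠ 0 := by
  induction n with
  | zero => simpa using ⟨hb, hs⟩
  | succ n ih =>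
    have hsum : s + n + (t - n) = 0 := by linarith
    obtain ⟨hb', hs'⟩ := ne_zero_shift_of_recurrence hrec hsum ih.2 ih.1
    push_cast
    rw [← add_assoc, sub_add_eq_sub_sub]
    exact ⟨hb', hs'⟩

theorem eq_zero_of_recurrence_of_bddAbove {M : ℝ} (hbd : ∀ s t : ℝ, b s t ≠ 0 → s ≤ M)
    {s t : ℝ} (hst : s + t = 0) (hb : b s t ≠ 0) : s = 0 := by
  by_contra hs
  obtain ⟨n, hn⟩ := exists_nat_gt (M - s)
  have := hbd _ _ (ne_zero_shift_nat_of_recurrence hrec hst hs hb n).1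
  linarith

end Recurrence

/-- If a formal series `f = Σ a_{s,s̄,t,t̄} x^s x̄^s̄ y^t ȳ^t̄` in
`ℂ[[y/x, ȳ/x̄]][x^±, x̄^±, |x|^ℝ, y^±, ȳ^±, |y|^ℝ]` is annihilated by
`x∂_x + y∂_y`, `x̄∂_x̄ + ȳ∂_ȳ`, `x²∂_x + y²∂_y` and `x̄²∂_x̄ + ȳ²∂_ȳ` (expressed on
coefficients), then `f` is constant, i.e. its only possibly nonzero coefficient is the
constant one. -/
theorem solutions_S2_are_constant (a : ℝ → ℝ → ℝ → ℝ → ℂ) (hT : MemT2 a)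
    (hD0 : ∀ s sb t tb : ℝ, ((s + t : ℝ) : ℂ) * a s sb t tb = 0)
    (hD0b : ∀ s sb t tb : ℝ, ((sb + tb : ℝ) : ℂ) * a s sb t tb = 0)
    (hD1 : ∀ s sb t tb : ℝ,
      ((s - 1 : ℝ) : ℂ) * a (s - 1) sb t tb + ((t - 1 : ℝ) : ℂ) * a s sb (t - 1) tb = 0)
    (hD1b : ∀ s sb t tb : ℝ,
      ((sb - 1 : ℝ) : ℂ) * a s (sb - 1) t tb + ((tb - 1 : ℝ) : ℂ) * a s sb t (tb - 1) = 0) :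
    ∀ s sb t tb : ℝ, ¬(s = 0 ∧ sb = 0 ∧ t = 0 ∧ tb = 0) → a s sb t tb = 0 := by
  intro s sb t tb hne
  by_contra ha
  obtain ⟨M, hM⟩ := hT.exists_bound
  have hst : s + t = 0 :=
    Complex.ofReal_eq_zero.mp ((mul_eq_zero.mp (hD0 s sb t tb)).resolve_right ha)
  have hsbtb : sb + tb = 0 :=
    Complex.ofReal_eq_zero.mp ((mul_eq_zero.mp (hD0b s sb t tb)).resolve_right ha)
  have hs : s = 0 := eq_zero_of_recurrence_of_bddAbove (b := fun u v => a u sb v tb)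
    (fun u v => hD1 u sb v tb) (fun u v h => (hM u sb v tb h).1) hst ha
  have hsb : sb = 0 := eq_zero_of_recurrence_of_bddAbove (b := fun u v => a s u t v)
    (fun u v => hD1b s u t v) (fun u v h => (hM s u t v h).2) hsbtb ha
  exact hne ⟨hs, hsb, by linarith, by linarith⟩
end
end

section
/- If a function μ in the space GCor₂ of generalized two-point functions satisfies ∂μ/∂z̄₁ = 0 and ∂μ/∂z̄₂ = 0, then μ is a Laurent polynomial in ℂ[z₁^±, z₂^±, (z₁−z₂)^±]. -/
noncomputable section

open scoped BigOperators

/-- The single-valued real-power monomial `z^r z̄^s` (principal branch). -/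
def rpm (z : ℂ) (r s : ℝ) : ℂ := z ^ (r : ℂ) * (starRingEnd ℂ z) ^ (s : ℂ)

/-- `f` has a conformal singularity at `0`: it has an absolutely convergent expansion
`Σ_{r,s∈ℝ} a_{r,s} z^r z̄^s` in a punctured disc around `0`, where `a_{r,s} = 0` unless
`r - s ∈ ℤ`, the support is countable and the exponents are bounded below. -/
def ConformalSingAtZero (f : ℂ → ℂ) : Prop :=
  ∃ (a : ℝ → ℝ → ℂ) (R : ℝ), 0 < R ∧
    (∀ r s : ℝ, (∀ k : ℤ, r - s ≠ (k : ℝ)) → a r s = 0) ∧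
    (∃ N : ℝ, ∀ r s : ℝ, (r < N ∨ s < N) → a r s = 0) ∧
    Set.Countable {p : ℝ × ℝ | a p.1 p.2 ≠ 0} ∧
    ∀ z : ℂ, z ≠ 0 → ‖z‖ < R →
      HasSum (fun p : ℝ × ℝ => a p.1 p.2 * rpm z p.1 p.2) (f z)

/-- Membership in `F_{0,1,∞}`: real analytic on `ℂP¹ ∖ {0,1,∞}` with conformal
singularities at `0`, `1` and `∞`. -/
def MemF01inf (f : ℂ → ℂ) : Prop :=
  AnalyticOnNhd ℝ f {z : ℂ | z ≠ 0 ∧ z ≠ 1} ∧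
  ConformalSingAtZero f ∧
  ConformalSingAtZero (fun p => f (1 - p)) ∧
  ConformalSingAtZero (fun p => f p⁻¹)

/-- Membership in the space `GCor₂` of generalized two-point functions on
`Y₂ = {(z₁,z₂) : z₁ ≠ z₂, z₁ ≠ 0, z₂ ≠ 0}`. -/
def MemGCor2 (μ : ℂ → ℂ → ℂ) : Prop :=
  ∃ (k : ℕ) (α₁ α₂ α₃ β₁ β₂ β₃ : Fin k → ℝ) (f : Fin k → ℂ → ℂ),
    (∀ i, MemF01inf (f i)) ∧
    (∀ i, ∃ m : ℤ, α₁ i - β₁ i = (m : ℝ)) ∧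
    (∀ i, ∃ m : ℤ, α₂ i - β₂ i = (m : ℝ)) ∧
    (∀ i, ∃ m : ℤ, α₃ i - β₃ i = (m : ℝ)) ∧
    ∀ z₁ z₂ : ℂ, z₁ ≠ 0 → z₂ ≠ 0 → z₁ ≠ z₂ →
      μ z₁ z₂ = ∑ i, rpm z₁ (α₁ i) (β₁ i) * rpm z₂ (α₂ i) (β₂ i) *
        rpm (z₁ - z₂) (α₃ i) (β₃ i) * f i (z₂ / z₁)

/-!
A generalized two-point function has moderate growth on `Y₂`: the powers `rpm u r s` are bounded
by powers of `‖u‖` and `‖u‖⁻¹` for `u = z₁, z₂, z₁ - z₂`, and a conformal singularity of `f` at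
`0`, `1` and `∞` bounds `f q` by powers of `‖q‖⁻¹`, `‖q - 1‖⁻¹` and `‖q‖` near the punctures, while
compactness bounds it in between. Hence `G = (z₁ z₂ (z₁ - z₂)) ^ n * μ` is bounded by
`K ((1 + ‖z₁‖) (1 + ‖z₂‖)) ^ D`. When `μ` is holomorphic, every slice of `G` is holomorphic off
two points with polynomial growth, so by Riemann's removable singularity theorem and Cauchy's
estimates it is a polynomial of degree at most `D`. Lagrange interpolation in `z₁` at `D + 1`
nodes, followed by the identity theorem for polynomials in `z₂`, shows that `G` is a polynomial in
both variables; dividing by `(z₁ z₂ (z₁ - z₂)) ^ n` gives the Laurent polynomial.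
-/

open Filter Topology Asymptotics Set Metric Bornology Polynomial

section ModerateGrowth

variable {α E : Type*} {l l' : Filter α} {w u : α → ℝ}

def ModerateGrowth [Norm E] (l : Filter α) (w : α → ℝ) (f : α → E) : Prop :=
  ∃ n : ℕ, f =O[l] fun x => w x ^ n

lemma isBigO_pow_pow_of_abs_le {k n : ℕ} (hkn : k ≤ n) (hu : ∀ᶠ x in l, |u x| ≤ w x)
    (hw : ∀ᶠ x in l, 1 ≤ w x) : (fun x => u x ^ k) =O[l] fun x => w x ^ n := by
  refine IsBigO.of_bound 1 ?_
  filter_upwards [hu, hw] with x hux hwx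
  rw [one_mul, Real.norm_eq_abs, Real.norm_eq_abs, abs_pow, abs_pow,
    abs_of_nonneg (show 0 ≤ w x by linarith)]
  exact (pow_le_pow_left₀ (abs_nonneg _) hux k).trans (pow_le_pow_right₀ hwx hkn)

namespace ModerateGrowth

section Norm

variable [Norm E] {f g : α → E}

lemma mono (hf : ModerateGrowth l w f) (hl : l' ≤ l) : ModerateGrowth l' w f :=
  let ⟨n, hn⟩ := hf; ⟨n, hn.mono hl⟩

lemma congr' (hf : ModerateGrowth l w f) (hfg : f =ᶠ[l] g) : ModerateGrowth l w g :=
  let ⟨n, hn⟩ := hf; ⟨n, hn.congr' hfg EventuallyEq.rfl⟩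

lemma weight_mono (hf : ModerateGrowth l u f) (huw : ∀ᶠ x in l, |u x| ≤ w x) :
    ModerateGrowth l w f := by
  obtain ⟨n, hn⟩ := hf
  refine ⟨n, hn.trans (IsBigO.of_bound 1 ?_)⟩
  filter_upwards [huw] with x hx
  rw [one_mul, Real.norm_eq_abs, Real.norm_eq_abs, abs_pow, abs_pow]
  exact pow_le_pow_left₀ (abs_nonneg _) (hx.trans (le_abs_self _)) n

lemma comp_tendsto {β : Type*} {l'' : Filter β} {k : β → α} (hf : ModerateGrowth l w f)
    (hk : Tendsto k l'' l) : ModerateGrowth l'' (w ∘ k) (f ∘ k) :=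
  let ⟨n, hn⟩ := hf; ⟨n, hn.comp_tendsto hk⟩

lemma eventually_isBigO (hf : ModerateGrowth l w f) (hw : ∀ᶠ x in l, 1 ≤ w x) :
    ∀ᶠ n in atTop, f =O[l] fun x => w x ^ n := by
  obtain ⟨m, hm⟩ := hf
  filter_upwards [eventually_ge_atTop m] with n hn
  exact hm.trans (isBigO_pow_pow_of_abs_le hn
    (hw.mono fun x hx => (abs_of_nonneg (by linarith)).le) hw)

lemma sup (hf : ModerateGrowth l w f) (hf' : ModerateGrowth l' w f) (hw : ∀ᶠ x in l, 1 ≤ w x)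
    (hw' : ∀ᶠ x in l', 1 ≤ w x) : ModerateGrowth (l ⊔ l') w f :=
  let ⟨n, hn, hn'⟩ := ((hf.eventually_isBigO hw).and (hf'.eventually_isBigO hw')).exists
  ⟨n, isBigO_sup.2 ⟨hn, hn'⟩⟩

end Norm

section Ring

variable [SeminormedRing E] {f g : α → E}

lemma zero : ModerateGrowth l w (0 : α → E) := ⟨0, isBigO_zero _ _⟩

lemma add (hf : ModerateGrowth l w f) (hg : ModerateGrowth l w g) (hw : ∀ᶠ x in l, 1 ≤ w x) :
    ModerateGrowth l w (f + g) :=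
  let ⟨n, hn, hn'⟩ := ((hf.eventually_isBigO hw).and (hg.eventually_isBigO hw)).exists
  ⟨n, hn.add hn'⟩

lemma mul (hf : ModerateGrowth l w f) (hg : ModerateGrowth l w g) :
    ModerateGrowth l w fun x => f x * g x := by
  obtain ⟨m, hm⟩ := hf
  obtain ⟨n, hn⟩ := hg
  exact ⟨m + n, by simpa only [pow_add] using hm.mul hn⟩

lemma sum {ι : Type*} (s : Finset ι) {f : ι → α → E} (hf : ∀ i ∈ s, ModerateGrowth l w (f i))
    (hw : ∀ᶠ x in l, 1 ≤ w x) : ModerateGrowth l w (∑ i ∈ s, f i) :=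
  Finset.sum_induction f (ModerateGrowth l w) (fun _ _ ha hb => ha.add hb hw) zero hf

end Ring

end ModerateGrowth

end ModerateGrowth

lemma one_le_of_le_of_inv_le {x y : ℝ} (hx : 0 < x) (hxy : x ≤ y) (hxy' : x⁻¹ ≤ y) : 1 ≤ y := by
  rcases le_total x 1 with h | h
  · exact ((one_le_inv₀ hx).2 h).trans hxy'
  · exact h.trans hxy

lemma rpow_le_pow_natCeil_abs {x y t : ℝ} (hx : 0 < x) (hxy : x ≤ y) (hxy' : x⁻¹ ≤ y) :
    x ^ t ≤ y ^ ⌈|t|⌉₊ := by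
  have hy : 1 ≤ y := one_le_of_le_of_inv_le hx hxy hxy'
  calc x ^ t ≤ y ^ |t| := by
        rcases le_total 0 t with ht | ht
        · rw [abs_of_nonneg ht]
          exact Real.rpow_le_rpow hx.le hxy ht
        · rw [abs_of_nonpos ht, ← inv_inv (x ^ t), ← Real.rpow_neg hx.le, ← Real.inv_rpow hx.le]
          exact Real.rpow_le_rpow (inv_nonneg.2 hx.le) hxy' (neg_nonneg.2 ht)
    _ ≤ y ^ (⌈|t|⌉₊ : ℝ) := Real.rpow_le_rpow_of_exponent_le hy (Nat.le_ceil _)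
    _ = y ^ ⌈|t|⌉₊ := Real.rpow_natCast _ _

lemma le_pow_add_two_div_mul {x P W : ℝ} {k : ℕ} (hx : 0 < x) (hP : 0 < P) (hxW : x ≤ W)
    (hPW : P ≤ W ^ k) : x ≤ W ^ (k + 2) / (x * P) := by
  have hW : 0 ≤ W := hx.le.trans hxW
  rw [le_div_iff₀ (by positivity)]
  calc x * (x * P) ≤ W * (W * W ^ k) := by gcongr
    _ = W ^ (k + 2) := by ring

lemma inv_le_pow_add_two_div_mul {x P W : ℝ} {k : ℕ} (hx : 0 < x) (hP : 0 < P) (hW : 1 ≤ W)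
    (hPW : P ≤ W ^ k) : x⁻¹ ≤ W ^ (k + 2) / (x * P) := by
  rw [le_div_iff₀ (by positivity), inv_mul_cancel_left₀ hx.ne']
  exact hPW.trans (pow_le_pow_right₀ hW (by omega))

lemma rpow_le_inv_pow_mul_rpow {x ρ t : ℝ} {n : ℕ} (hx : 0 < x) (hxρ : x ≤ ρ)
    (ht : -(n : ℝ) ≤ t) : x ^ t ≤ x⁻¹ ^ n * ρ ^ n * ρ ^ t := by
  have hρ : 0 < ρ := hx.trans_le hxρ
  calc x ^ t = x⁻¹ ^ n * x ^ ((n : ℝ) + t) := by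
        rw [Real.rpow_add hx, Real.rpow_natCast, inv_pow,
          inv_mul_cancel_left₀ (pow_ne_zero _ hx.ne')]
    _ ≤ x⁻¹ ^ n * ρ ^ ((n : ℝ) + t) := by gcongr; linarith
    _ = x⁻¹ ^ n * ρ ^ n * ρ ^ t := by rw [Real.rpow_add hρ, Real.rpow_natCast, mul_assoc]

lemma norm_rpm {z : ℂ} (hz : z ≠ 0) (r s : ℝ) : ‖rpm z r s‖ = ‖z‖ ^ (r + s) := by
  rw [rpm, norm_mul, Complex.norm_cpow_real, Complex.norm_cpow_real, Complex.norm_conj,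
    ← Real.rpow_add (norm_pos_iff.2 hz)]

lemma moderateGrowth_rpm {α : Type*} {l : Filter α} {w : α → ℝ} {v : α → ℂ}
    (hv : ∀ᶠ x in l, v x ≠ 0 ∧ ‖v x‖ ≤ w x ∧ ‖v x‖⁻¹ ≤ w x) (r s : ℝ) :
    ModerateGrowth l w fun x => rpm (v x) r s := by
  refine ⟨⌈|r + s|⌉₊, IsBigO.of_bound 1 ?_⟩
  filter_upwards [hv] with x ⟨hv0, hvw, hvw'⟩
  have hpos : 0 < ‖v x‖ := norm_pos_iff.2 hv0
  have hw : 0 ≤ w x := (one_le_of_le_of_inv_le hpos hvw hvw').trans' zero_le_one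
  rw [one_mul, norm_rpm hv0, norm_pow, Real.norm_of_nonneg hw]
  exact rpow_le_pow_natCeil_abs hpos hvw hvw'

lemma isBigO_principal_of_isBigO_inf_principal {X E : Type*} [TopologicalSpace X]
    [SeminormedAddCommGroup E] {f : X → E} {g : X → ℝ} {L : Filter X} {S : Set X}
    (hfg : f =O[L ⊓ 𝓟 S] g) (hL : ∀ U ∈ L, ∃ M, IsCompact M ∧ M ⊆ S ∧ S ⊆ U ∪ M)
    (hf : ContinuousOn f S) (hg : ∀ x ∈ S, 1 ≤ g x) : f =O[𝓟 S] g := by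
  obtain ⟨c, hc⟩ := hfg.bound
  obtain ⟨M, hM, hMS, hSM⟩ := hL _ (mem_inf_principal.1 hc)
  obtain ⟨c', hc'⟩ := hM.exists_bound_of_continuousOn (hf.mono hMS)
  refine IsBigO.of_bound (max c c') (eventually_principal.2 fun x hx => ?_)
  have hgx : 1 ≤ ‖g x‖ := (hg x hx).trans (le_abs_self _)
  rcases hSM hx with hxU | hxM
  · exact (hxU hx).trans (mul_le_mul_of_nonneg_right (le_max_left _ _) (norm_nonneg _))
  · calc ‖f x‖ ≤ c' := hc' x hxM
      _ ≤ c' * ‖g x‖ := le_mul_of_one_le_right ((norm_nonneg _).trans (hc' x hxM)) hgx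
      _ ≤ max c c' * ‖g x‖ := mul_le_mul_of_nonneg_right (le_max_right _ _) (norm_nonneg _)

lemma exists_isCompact_cover_compl_zero_one {U : Set ℂ}
    (hU : U ∈ 𝓝[≠] 0 ⊔ 𝓝[≠] 1 ⊔ cobounded ℂ) :
    ∃ M, IsCompact M ∧ M ⊆ ({0, 1} : Set ℂ)ᶜ ∧ ({0, 1} : Set ℂ)ᶜ ⊆ U ∪ M := by
  simp only [mem_sup] at hU
  obtain ⟨⟨h0, h1⟩, hinf⟩ := hU
  obtain ⟨V₀, hV₀, h0V₀, hV₀U⟩ := mem_nhdsWithin.1 h0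
  obtain ⟨V₁, hV₁, h1V₁, hV₁U⟩ := mem_nhdsWithin.1 h1
  obtain ⟨R, -, hR⟩ := (hasBasis_cobounded_compl_closedBall (0 : ℂ)).mem_iff.1 hinf
  refine ⟨closedBall 0 R \ (V₀ ∪ V₁), (isCompact_closedBall 0 R).diff (hV₀.union hV₁), ?_, ?_⟩
  · rintro z ⟨-, hz⟩ (rfl | rfl)
    exacts [hz (Or.inl h0V₀), hz (Or.inr h1V₁)]
  · intro z hz
    simp only [mem_compl_iff, mem_insert_iff, mem_singleton_iff, not_or] at hz
    by_cases hz₀ : z ∈ V₀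
    · exact Or.inl (hV₀U ⟨hz₀, hz.1⟩)
    by_cases hz₁ : z ∈ V₁
    · exact Or.inl (hV₁U ⟨hz₁, hz.2⟩)
    by_cases hzR : z ∈ closedBall 0 R
    · exact Or.inr ⟨hzR, not_or.2 ⟨hz₀, hz₁⟩⟩
    · exact Or.inl (hR hzR)

-- A simple pole at each of `0`, `1`, `∞`; the cube makes it dominate `‖q‖`, `‖q‖⁻¹`, `‖q - 1‖⁻¹`.
def weight01 (q : ℂ) : ℝ := (1 + ‖q‖) ^ 3 / (‖q‖ * ‖q - 1‖)

lemma norm_sub_one_le_one_add_norm (q : ℂ) : ‖q - 1‖ ≤ 1 + ‖q‖ := by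
  simpa [add_comm] using norm_sub_le q 1

section weight01

variable {q : ℂ}

lemma norm_le_weight01 (hq0 : q ≠ 0) (hq1 : q ≠ 1) : ‖q‖ ≤ weight01 q :=
  le_pow_add_two_div_mul (k := 1) (norm_pos_iff.2 hq0) (norm_pos_iff.2 (sub_ne_zero.2 hq1))
    (by linarith) (by simpa using norm_sub_one_le_one_add_norm q)

lemma norm_inv_le_weight01 (hq0 : q ≠ 0) (hq1 : q ≠ 1) : ‖q‖⁻¹ ≤ weight01 q :=
  inv_le_pow_add_two_div_mul (k := 1) (norm_pos_iff.2 hq0) (norm_pos_iff.2 (sub_ne_zero.2 hq1))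
    (by linarith [norm_nonneg q]) (by simpa using norm_sub_one_le_one_add_norm q)

lemma norm_sub_one_inv_le_weight01 (hq0 : q ≠ 0) (hq1 : q ≠ 1) :
    ‖q - 1‖⁻¹ ≤ weight01 q := by
  rw [weight01, mul_comm]
  exact inv_le_pow_add_two_div_mul (k := 1) (norm_pos_iff.2 (sub_ne_zero.2 hq1))
    (norm_pos_iff.2 hq0) (by linarith [norm_nonneg q]) (by simp)

lemma one_le_weight01 (hq0 : q ≠ 0) (hq1 : q ≠ 1) : 1 ≤ weight01 q :=
  one_le_of_le_of_inv_le (norm_pos_iff.2 hq0) (norm_le_weight01 hq0 hq1)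
    (norm_inv_le_weight01 hq0 hq1)

end weight01

lemma ConformalSingAtZero.moderateGrowth {f : ℂ → ℂ} (hf : ConformalSingAtZero f) :
    ModerateGrowth (𝓝[≠] 0) (fun z => ‖z‖⁻¹) f := by
  obtain ⟨a, R, hR, -, ⟨N, hN⟩, -, hsum⟩ := hf
  obtain ⟨ρ, hρ, hρR⟩ : ∃ ρ, 0 < ρ ∧ ρ < R := ⟨R / 2, by positivity, by linarith⟩
  have hρC : (ρ : ℂ) ≠ 0 := by exact_mod_cast hρ.ne'
  have hs : Summable fun i : ℝ × ℝ => ‖a i.1 i.2‖ * ρ ^ (i.1 + i.2) := by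
    have := summable_norm_iff.2
      (hsum ρ hρC (by rwa [Complex.norm_real, Real.norm_of_nonneg hρ.le])).summable
    simpa only [norm_mul, norm_rpm hρC, Complex.norm_real, Real.norm_of_nonneg hρ.le] using this
  -- All exponents have `r + s ≥ 2 N ≥ -n`, so for `‖z‖ ≤ ρ` each term is at most
  -- `(ρ / ‖z‖) ^ n` times the corresponding term at `ρ`.
  set n := ⌈-2 * N⌉₊
  refine ⟨n, IsBigO.of_bound (ρ ^ n * ∑' i : ℝ × ℝ, ‖a i.1 i.2‖ * ρ ^ (i.1 + i.2)) ?_⟩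
  filter_upwards [self_mem_nhdsWithin, nhdsWithin_le_nhds (ball_mem_nhds 0 hρ)]
    with z (hz : z ≠ 0) hzρ
  rw [mem_ball_zero_iff] at hzρ
  have hz' : 0 < ‖z‖ := norm_pos_iff.2 hz
  refine ((hsum z hz (by linarith)).norm_le_of_bounded
    (hs.hasSum.mul_left (‖z‖⁻¹ ^ n * ρ ^ n)) fun i => ?_).trans_eq ?_
  · by_cases ha : a i.1 i.2 = 0
    · simp only [ha, zero_mul, norm_zero, mul_zero]
      positivity
    have hi : -(n : ℝ) ≤ i.1 + i.2 := by
      have h1 : N ≤ i.1 := not_lt.1 fun h => ha (hN _ _ (Or.inl h))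
      have h2 : N ≤ i.2 := not_lt.1 fun h => ha (hN _ _ (Or.inr h))
      linarith [Nat.le_ceil (-2 * N)]
    rw [norm_mul, norm_rpm hz]
    calc ‖a i.1 i.2‖ * ‖z‖ ^ (i.1 + i.2)
        ≤ ‖a i.1 i.2‖ * (‖z‖⁻¹ ^ n * ρ ^ n * ρ ^ (i.1 + i.2)) := by
          gcongr; exact rpow_le_inv_pow_mul_rpow hz' hzρ.le hi
      _ = _ := by ring
  · rw [norm_pow, norm_inv, norm_norm]
    ring

lemma ConformalSingAtZero.moderateGrowth_one {f : ℂ → ℂ}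
    (hf : ConformalSingAtZero fun p => f (1 - p)) :
    ModerateGrowth (𝓝[≠] 1) (fun z => ‖z - 1‖⁻¹) f := by
  have hk : Tendsto (fun z : ℂ => 1 - z) (𝓝[≠] 1) (𝓝[≠] 0) :=
    tendsto_nhdsWithin_of_tendsto_nhds_of_eventually_within _
      (((continuous_const.sub continuous_id).tendsto' 1 0 (sub_self 1)).mono_left
        nhdsWithin_le_nhds)
      (eventually_nhdsWithin_of_forall fun z hz => sub_ne_zero.2 (Ne.symm hz))
  simpa [Function.comp_def, norm_sub_rev] using hf.moderateGrowth.comp_tendsto hk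

lemma ConformalSingAtZero.moderateGrowth_cobounded {f : ℂ → ℂ}
    (hf : ConformalSingAtZero fun p => f p⁻¹) : ModerateGrowth (cobounded ℂ) norm f := by
  simpa [Function.comp_def] using hf.moderateGrowth.comp_tendsto tendsto_inv₀_cobounded'

lemma MemF01inf.moderateGrowth {f : ℂ → ℂ} (hf : MemF01inf f) :
    ModerateGrowth (𝓟 ({0, 1} : Set ℂ)ᶜ) weight01 f := by
  obtain ⟨hA, h0, h1, hinf⟩ := hf
  set S : Set ℂ := ({0, 1} : Set ℂ)ᶜ
  have hS : ∀ q ∈ S, q ≠ 0 ∧ q ≠ 1 := fun q hq => by simpa [S, not_or] using hq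
  have hw : ∀ l : Filter ℂ, ∀ᶠ q in l ⊓ 𝓟 S, 1 ≤ weight01 q := fun l =>
    (eventually_principal.2 fun q hq => one_le_weight01 (hS q hq).1 (hS q hq).2).filter_mono
      inf_le_right
  have localize : ∀ {l : Filter ℂ} {u : ℂ → ℝ}, ModerateGrowth l u f →
      (∀ q, q ≠ 0 → q ≠ 1 → |u q| ≤ weight01 q) → ModerateGrowth (l ⊓ 𝓟 S) weight01 f :=
    fun h hu => (h.mono inf_le_left).weight_mono
      ((eventually_principal.2 fun q hq => hu q (hS q hq).1 (hS q hq).2).filter_mono inf_le_right)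
  have H : ModerateGrowth ((𝓝[≠] 0 ⊔ 𝓝[≠] 1 ⊔ cobounded ℂ) ⊓ 𝓟 S) weight01 f := by
    rw [inf_sup_right, inf_sup_right]
    refine ((localize h0.moderateGrowth fun q hq0 hq1 => ?_).sup
      (localize h1.moderateGrowth_one fun q hq0 hq1 => ?_) (hw _) (hw _)).sup
      (localize hinf.moderateGrowth_cobounded fun q hq0 hq1 => ?_)
      (eventually_sup.2 ⟨hw _, hw _⟩) (hw _) <;>
      rw [abs_of_nonneg (by positivity)]
    exacts [norm_inv_le_weight01 hq0 hq1, norm_sub_one_inv_le_weight01 hq0 hq1,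
      norm_le_weight01 hq0 hq1]
  obtain ⟨n, hn⟩ := H
  exact ⟨n, isBigO_principal_of_isBigO_inf_principal hn
    (fun U hU => exists_isCompact_cover_compl_zero_one hU) (hA.continuousOn.mono hS)
    fun q hq => one_le_pow₀ (one_le_weight01 (hS q hq).1 (hS q hq).2)⟩

def Y₂ : Set (ℂ × ℂ) := {p | p.1 ≠ p.2 ∧ p.1 ≠ 0 ∧ p.2 ≠ 0}

-- The fourth power makes it dominate `‖u‖` and `‖u‖⁻¹` for `u = z₁, z₂, z₁ - z₂`.
def weightY₂ (p : ℂ × ℂ) : ℝ :=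
  ((1 + ‖p.1‖) * (1 + ‖p.2‖)) ^ 4 / (‖p.1‖ * ‖p.2‖ * ‖p.1 - p.2‖)

section weightY₂

variable {p : ℂ × ℂ}

lemma ne_zero_and_norm_le_weightY₂ (hp : p ∈ Y₂) {v : ℂ} (hv : v = p.1 ∨ v = p.2 ∨ v = p.1 - p.2) :
    v ≠ 0 ∧ ‖v‖ ≤ weightY₂ p ∧ ‖v‖⁻¹ ≤ weightY₂ p := by
  obtain ⟨h12, h1, h2⟩ := hp
  have ha : 0 < ‖p.1‖ := norm_pos_iff.2 h1
  have hb : 0 < ‖p.2‖ := norm_pos_iff.2 h2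
  have hc : 0 < ‖p.1 - p.2‖ := norm_pos_iff.2 (sub_ne_zero.2 h12)
  set W := (1 + ‖p.1‖) * (1 + ‖p.2‖)
  have haW : ‖p.1‖ ≤ W := by nlinarith
  have hbW : ‖p.2‖ ≤ W := by nlinarith
  have hcW : ‖p.1 - p.2‖ ≤ W := (norm_sub_le _ _).trans (by nlinarith)
  have hW : 1 ≤ W := by nlinarith
  have key : ∀ x y z : ℝ, 0 < x → 0 < y → 0 < z → x ≤ W → y ≤ W → z ≤ W →
      x ≤ W ^ 4 / (x * (y * z)) ∧ x⁻¹ ≤ W ^ 4 / (x * (y * z)) := fun x y z hx hy hz hxW hyW hzW =>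
    have hyz : y * z ≤ W ^ 2 := by rw [sq]; gcongr
    ⟨le_pow_add_two_div_mul hx (by positivity) hxW hyz,
      inv_le_pow_add_two_div_mul hx (by positivity) hW hyz⟩
  rw [weightY₂]
  rcases hv with rfl | rfl | rfl
  · exact ⟨h1, by simpa only [mul_assoc] using key _ _ _ ha hb hc haW hbW hcW⟩
  · refine ⟨h2, ?_⟩
    rw [show ‖p.1‖ * ‖p.2‖ * ‖p.1 - p.2‖ = ‖p.2‖ * (‖p.1‖ * ‖p.1 - p.2‖) by ring]
    exact key _ _ _ hb ha hc hbW haW hcW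
  · refine ⟨sub_ne_zero.2 h12, ?_⟩
    rw [show ‖p.1‖ * ‖p.2‖ * ‖p.1 - p.2‖ = ‖p.1 - p.2‖ * (‖p.1‖ * ‖p.2‖) by ring]
    exact key _ _ _ hc ha hb hcW haW hbW

lemma one_le_weightY₂ (hp : p ∈ Y₂) : 1 ≤ weightY₂ p :=
  have h := ne_zero_and_norm_le_weightY₂ hp (Or.inl rfl)
  one_le_of_le_of_inv_le (norm_pos_iff.2 h.1) h.2.1 h.2.2

lemma weight01_div_le_weightY₂ (hp : p ∈ Y₂) : weight01 (p.2 / p.1) ≤ weightY₂ p := by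
  obtain ⟨h12, h1, h2⟩ := hp
  have ha : 0 < ‖p.1‖ := norm_pos_iff.2 h1
  have hb : 0 < ‖p.2‖ := norm_pos_iff.2 h2
  have hc : 0 < ‖p.1 - p.2‖ := norm_pos_iff.2 (sub_ne_zero.2 h12)
  have hW : ‖p.1‖ + ‖p.2‖ ≤ (1 + ‖p.1‖) * (1 + ‖p.2‖) := by nlinarith
  have hq : ‖p.2 / p.1 - 1‖ = ‖p.1 - p.2‖ / ‖p.1‖ := by
    rw [div_sub_one h1, norm_div, norm_sub_rev]
  rw [weight01, weightY₂, norm_div, hq,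
    show (1 + ‖p.2‖ / ‖p.1‖) ^ 3 / (‖p.2‖ / ‖p.1‖ * (‖p.1 - p.2‖ / ‖p.1‖))
      = (‖p.1‖ + ‖p.2‖) ^ 3 / (‖p.1‖ * ‖p.2‖ * ‖p.1 - p.2‖) by field_simp]
  gcongr
  calc (‖p.1‖ + ‖p.2‖) ^ 3 ≤ ((1 + ‖p.1‖) * (1 + ‖p.2‖)) ^ 3 := by gcongr
    _ ≤ ((1 + ‖p.1‖) * (1 + ‖p.2‖)) ^ 4 := pow_le_pow_right₀ (by nlinarith) (by norm_num)

end weightY₂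

lemma ModerateGrowth.comp_snd_div_fst {f : ℂ → ℂ}
    (hf : ModerateGrowth (𝓟 ({0, 1} : Set ℂ)ᶜ) weight01 f) :
    ModerateGrowth (𝓟 Y₂) weightY₂ fun p => f (p.2 / p.1) := by
  refine (hf.comp_tendsto (k := fun p : ℂ × ℂ => p.2 / p.1)
    (tendsto_principal_principal.2 fun p hp => ?_)).weight_mono
    (eventually_principal.2 fun p hp => ?_)
  · obtain ⟨h12, h1, h2⟩ := hp
    rintro (h | h)
    · exact div_ne_zero h2 h1 h
    · exact h12 ((div_eq_one_iff_eq h1).1 h).symm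
  · rw [Function.comp_apply, abs_of_nonneg (by unfold weight01; positivity)]
    exact weight01_div_le_weightY₂ hp

lemma MemGCor2.moderateGrowth {μ : ℂ → ℂ → ℂ} (hμ : MemGCor2 μ) :
    ModerateGrowth (𝓟 Y₂) weightY₂ fun p => μ p.1 p.2 := by
  obtain ⟨k, α₁, α₂, α₃, β₁, β₂, β₃, f, hf, -, -, -, hμ⟩ := hμ
  have hw : ∀ᶠ p in 𝓟 Y₂, 1 ≤ weightY₂ p :=
    eventually_principal.2 fun p hp => one_le_weightY₂ hp
  have hrpm : ∀ {v : ℂ × ℂ → ℂ}, (∀ p, v p = p.1 ∨ v p = p.2 ∨ v p = p.1 - p.2) →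
      ∀ r s : ℝ, ModerateGrowth (𝓟 Y₂) weightY₂ fun p => rpm (v p) r s := fun hv =>
    moderateGrowth_rpm (eventually_principal.2 fun p hp => ne_zero_and_norm_le_weightY₂ hp (hv p))
  have hterm : ∀ i, ModerateGrowth (𝓟 Y₂) weightY₂ fun p =>
      rpm p.1 (α₁ i) (β₁ i) * rpm p.2 (α₂ i) (β₂ i) * rpm (p.1 - p.2) (α₃ i) (β₃ i) *
        f i (p.2 / p.1) := fun i =>
    (((hrpm (fun p => Or.inl rfl) _ _).mul (hrpm (fun p => Or.inr (Or.inl rfl)) _ _)).mul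
      (hrpm (fun p => Or.inr (Or.inr rfl)) _ _)).mul (hf i).moderateGrowth.comp_snd_div_fst
  refine (ModerateGrowth.sum Finset.univ (fun i _ => hterm i) hw).congr'
    (eventually_principal.2 fun p hp => ?_)
  obtain ⟨h12, h1, h2⟩ := hp
  exact (Finset.sum_apply _ _ _).trans (hμ _ _ h1 h2 h12).symm

lemma ModerateGrowth.exists_norm_mul_pow_le {φ : ℂ × ℂ → ℂ}
    (hφ : ModerateGrowth (𝓟 Y₂) weightY₂ φ) :
    ∃ (n : ℕ) (K : ℝ), ∀ p ∈ Y₂,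
      ‖(p.1 * p.2 * (p.1 - p.2)) ^ n * φ p‖ ≤ K * ((1 + ‖p.1‖) * (1 + ‖p.2‖)) ^ (4 * n) := by
  obtain ⟨n, hn⟩ := hφ
  obtain ⟨K, hK⟩ := hn.bound
  refine ⟨n, K, fun p hp => ?_⟩
  have hφp := eventually_principal.1 hK p hp
  obtain ⟨h12, h1, h2⟩ := hp
  have hm : 0 < ‖p.1‖ * ‖p.2‖ * ‖p.1 - p.2‖ := by
    have := sub_ne_zero.2 h12
    positivity
  have hw : (‖p.1‖ * ‖p.2‖ * ‖p.1 - p.2‖) * weightY₂ p = ((1 + ‖p.1‖) * (1 + ‖p.2‖)) ^ 4 :=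
    mul_div_cancel₀ _ hm.ne'
  rw [Real.norm_of_nonneg (by unfold weightY₂; positivity)] at hφp
  rw [norm_mul, norm_pow, norm_mul, norm_mul, pow_mul, ← hw]
  calc (‖p.1‖ * ‖p.2‖ * ‖p.1 - p.2‖) ^ n * ‖φ p‖
      ≤ (‖p.1‖ * ‖p.2‖ * ‖p.1 - p.2‖) ^ n * (K * weightY₂ p ^ n) := by gcongr
    _ = _ := by rw [mul_pow _ (weightY₂ p)]; ring

lemma exists_differentiable_eqOn_of_finite_compl {E : Type*} [NormedAddCommGroup E]
    [NormedSpace ℂ E] [CompleteSpace E] {f : ℂ → E} {U : Set ℂ} (hU : Uᶜ.Finite)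
    (hf : DifferentiableOn ℂ f U) (hb : ∀ c, IsBoundedUnder (· ≤ ·) (𝓝[≠] c) fun z => ‖f z‖) :
    ∃ F : ℂ → E, Differentiable ℂ F ∧ EqOn F f U := by
  classical
  have hUo : IsOpen U := by simpa using hU.isClosed.isOpen_compl
  have hev : ∀ c, ∀ᶠ z in 𝓝[≠] c, z ∈ U := fun c => nhdsNE_le_cofinite c (mem_cofinite.2 hU)
  set F : ℂ → E := fun z => if z ∈ U then f z else limUnder (𝓝[≠] z) f
  have hFf : EqOn F f U := fun z hz => if_pos hz
  have hdiff : ∀ z ∈ U, DifferentiableAt ℂ F z := fun z hz =>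
    (hf.differentiableAt (hUo.mem_nhds hz)).congr_of_eventuallyEq
      (eventually_of_mem (hUo.mem_nhds hz) hFf)
  refine ⟨F, fun c => ?_, hFf⟩
  by_cases hc : c ∈ U
  · exact hdiff c hc
  refine (Complex.analyticAt_of_differentiable_on_punctured_nhds_of_continuousAt
    ((hev c).mono hdiff) ?_).differentiableAt
  obtain ⟨B, hB⟩ := hb c
  have hlim := Complex.tendsto_limUnder_of_differentiable_on_punctured_nhds_of_bounded_under
    ((hev c).mono fun z hz => hf.differentiableAt (hUo.mem_nhds hz))
    ⟨B + ‖f c‖, eventually_map.2 ((eventually_map.1 hB).mono fun z hz =>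
      (norm_sub_le _ _).trans (by linarith))⟩
  rw [← continuousWithinAt_compl_self, ContinuousWithinAt, show F c = limUnder (𝓝[≠] c) f from
    if_neg hc]
  exact hlim.congr' ((hev c).mono fun z hz => (hFf hz).symm)

lemma Differentiable.iteratedDeriv_eq_zero_of_isBigO {E : Type*} [NormedAddCommGroup E]
    [NormedSpace ℂ E] [CompleteSpace E] {H : ℂ → E} (hH : Differentiable ℂ H) {D k : ℕ}
    (hDk : D < k) (hb : H =O[cobounded ℂ] fun z => ‖z‖ ^ D) : iteratedDeriv k H 0 = 0 := by
  obtain ⟨A, hA, hAb⟩ := hb.exists_pos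
  obtain ⟨r, -, hr⟩ := (hasBasis_cobounded_compl_closedBall (0 : ℂ)).eventually_iff.1 hAb.bound
  have key : ∀ R : ℝ, max r 1 < R → ‖iteratedDeriv k H 0‖ ≤ k.factorial * A / R := by
    intro R hR
    have hR1 : 1 < R := (le_max_right _ _).trans_lt hR
    have hR0 : 0 < R := zero_lt_one.trans hR1
    have hsphere : ∀ z ∈ sphere (0 : ℂ) R, ‖H z‖ ≤ A * R ^ D := fun z hz => by
      rw [mem_sphere_zero_iff_norm] at hz
      have hz' : z ∈ (closedBall (0 : ℂ) r)ᶜ := by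
        rw [mem_compl_iff, mem_closedBall_zero_iff, hz, not_le]
        exact (le_max_left _ _).trans_lt hR
      simpa [hz, abs_of_pos hR0] using hr hz'
    calc ‖iteratedDeriv k H 0‖ ≤ k.factorial * (A * R ^ D) / R ^ k :=
          Complex.norm_iteratedDeriv_le_of_forall_mem_sphere_norm_le k hR0 hH.diffContOnCl hsphere
      _ ≤ k.factorial * A / R := by
          rw [div_le_div_iff₀ (by positivity) hR0]
          calc (k.factorial : ℝ) * (A * R ^ D) * R = k.factorial * A * R ^ (D + 1) := by ring
            _ ≤ k.factorial * A * R ^ k := by gcongr; exacts [hR1.le, hDk]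
  refine norm_le_zero_iff.1
    (ge_of_tendsto (tendsto_const_div_atTop_nhds_zero_nat (k.factorial * A)) ?_)
  filter_upwards [eventually_gt_atTop ⌈max r 1⌉₊] with n hn
  exact key n (Nat.lt_of_ceil_lt hn)

lemma Differentiable.exists_polynomial_of_isBigO {H : ℂ → ℂ} (hH : Differentiable ℂ H) {D : ℕ}
    (hb : H =O[cobounded ℂ] fun z => ‖z‖ ^ D) :
    ∃ p : ℂ[X], p.natDegree ≤ D ∧ ∀ z, H z = p.eval z := by
  refine ⟨∑ k ∈ Finset.range (D + 1), C ((k.factorial : ℂ)⁻¹ * iteratedDeriv k H 0) * X ^ k,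
    natDegree_sum_le_of_forall_le _ _ fun k hk =>
      (natDegree_C_mul_X_pow_le _ _).trans (Nat.lt_succ_iff.1 (Finset.mem_range.1 hk)),
    fun z => ?_⟩
  rw [← Complex.taylorSeries_eq_of_entire' 0 z hH, tsum_eq_sum (s := Finset.range (D + 1))]
  · simp [eval_finsetSum]
  · intro k hk
    rw [hH.iteratedDeriv_eq_zero_of_isBigO (by simpa using hk) hb, mul_zero, zero_mul]

lemma exists_polynomial_of_differentiableOn_of_norm_le {h : ℂ → ℂ} {U : Set ℂ} (hU : Uᶜ.Finite)
    (hd : DifferentiableOn ℂ h U) {K : ℝ} {D : ℕ} (hb : ∀ z ∈ U, ‖h z‖ ≤ K * (1 + ‖z‖) ^ D) :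
    ∃ p : ℂ[X], p.natDegree ≤ D ∧ ∀ z ∈ U, h z = p.eval z := by
  have hK : Continuous fun z : ℂ => K * (1 + ‖z‖) ^ D := by fun_prop
  have hev : ∀ c, ∀ᶠ z in 𝓝[≠] c, z ∈ U := fun c => nhdsNE_le_cofinite c (mem_cofinite.2 hU)
  obtain ⟨H, hH, hHh⟩ := exists_differentiable_eqOn_of_finite_compl hU hd fun c =>
    ((hK.tendsto c).mono_left nhdsWithin_le_nhds).isBoundedUnder_le.mono_le
      ((hev c).mono fun z hz => hb z hz)
  obtain ⟨p, hp, hHp⟩ := hH.exists_polynomial_of_isBigO (D := D) <| by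
    refine IsBigO.of_bound (|K| * 2 ^ D) ?_
    filter_upwards [Bornology.le_cofinite ℂ (mem_cofinite.2 hU), eventually_cobounded_le_norm 1]
      with z hz hz1
    rw [hHh hz, norm_pow, norm_norm, mul_assoc, ← mul_pow]
    exact (hb z hz).trans (mul_le_mul (le_abs_self K) (by gcongr; linarith) (by positivity)
      (abs_nonneg K))
  exact ⟨p, hp, fun z hz => (hHh hz).symm.trans (hHp z)⟩

lemma exists_polynomial_slices_of_differentiableOn_Y₂ {G : ℂ × ℂ → ℂ}
    (hG : DifferentiableOn ℂ G Y₂) {K : ℝ} {D : ℕ}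
    (hbd : ∀ p ∈ Y₂, ‖G p‖ ≤ K * ((1 + ‖p.1‖) * (1 + ‖p.2‖)) ^ D) :
    (∀ b ≠ 0, ∃ r : ℂ[X], r.natDegree ≤ D ∧ ∀ z, (z, b) ∈ Y₂ → G (z, b) = r.eval z) ∧
      ∀ a ≠ 0, ∃ r : ℂ[X], r.natDegree ≤ D ∧ ∀ b, (a, b) ∈ Y₂ → G (a, b) = r.eval b := by
  refine ⟨fun b hb => exists_polynomial_of_differentiableOn_of_norm_le
      ((toFinite {0, b}).subset fun z hz => by_contra fun h => ?_)
      (hG.comp (by fun_prop) fun z hz => hz)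
      (K := K * (1 + ‖b‖) ^ D) fun z hz => (hbd _ hz).trans_eq (by rw [mul_pow]; ring),
    fun a ha => exists_polynomial_of_differentiableOn_of_norm_le
      ((toFinite {0, a}).subset fun b hb => by_contra fun h => ?_)
      (hG.comp (by fun_prop) fun b hb => hb)
      (K := K * (1 + ‖a‖) ^ D) fun b hb => (hbd _ hb).trans_eq (by rw [mul_pow]; ring)⟩
  all_goals simp only [mem_insert_iff, mem_singleton_iff, not_or] at h
  exacts [hz ⟨h.2, h.1, hb⟩, hb ⟨Ne.symm h.2, ha, h.1⟩]

lemma Lagrange.eval_eq_sum_eval_mul_eval_basis {F : Type*} [Field F] {D : ℕ}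
    {w : Fin (D + 1) → F} (hw : Function.Injective w) {r : F[X]} (hr : r.natDegree ≤ D) (z : F) :
    r.eval z = ∑ m, r.eval (w m) * (Lagrange.basis Finset.univ w m).eval z := by
  have hdeg : r.degree < (Finset.univ : Finset (Fin (D + 1))).card := by
    rw [Finset.card_univ, Fintype.card_fin]
    exact (degree_le_of_natDegree_le hr).trans_lt (by exact_mod_cast Nat.lt_succ_self D)
  conv_lhs => rw [Lagrange.eq_interpolate hw.injOn hdeg]
  simp [Lagrange.interpolate_apply, eval_finsetSum]

lemma exists_sum_eval_mul_eval_of_slices {G : ℂ × ℂ → ℂ} {D : ℕ}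
    (h₁ : ∀ b ≠ 0, ∃ r : ℂ[X], r.natDegree ≤ D ∧ ∀ z, (z, b) ∈ Y₂ → G (z, b) = r.eval z)
    (h₂ : ∀ a ≠ 0, ∃ r : ℂ[X], r.natDegree ≤ D ∧ ∀ b, (a, b) ∈ Y₂ → G (a, b) = r.eval b) :
    ∃ p q : Fin (D + 1) → ℂ[X], (∀ m, (p m).natDegree ≤ D) ∧ (∀ m, (q m).natDegree ≤ D) ∧
      ∀ x ∈ Y₂, G x = ∑ m, (p m).eval x.1 * (q m).eval x.2 := by
  set w : Fin (D + 1) → ℂ := fun m => (m : ℕ) + 1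
  have hw : Function.Injective w := fun m m' h => Fin.ext (by simpa [w] using h)
  have hw0 : ∀ m, w m ≠ 0 := fun m => Nat.cast_add_one_ne_zero m
  choose q hq hGq using fun m => h₂ (w m) (hw0 m)
  set p : Fin (D + 1) → ℂ[X] := fun m => Lagrange.basis Finset.univ w m
  refine ⟨p, q, fun m => ?_, hq, ?_⟩
  · simp [p, Lagrange.natDegree_basis hw.injOn (Finset.mem_univ m)]
  have hgen : ∀ z b, (z, b) ∈ Y₂ → b ∉ range w →
      G (z, b) = ∑ m, (p m).eval z * (q m).eval b := by
    intro z b hzb hbw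
    obtain ⟨r, hr, hGr⟩ := h₁ b hzb.2.2
    have hwb : ∀ m, (w m, b) ∈ Y₂ := fun m => ⟨fun h => hbw ⟨m, h⟩, hw0 m, hzb.2.2⟩
    rw [hGr z hzb, Lagrange.eval_eq_sum_eval_mul_eval_basis hw hr]
    refine Finset.sum_congr rfl fun m _ => ?_
    rw [← hGr _ (hwb m), hGq m b (hwb m), mul_comm]
  -- Both sides are polynomials in the second variable that agree off a finite set.
  rintro ⟨z, b⟩ hzb
  obtain ⟨r, -, hGr⟩ := h₂ z hzb.2.1
  set Q := ∑ m, C ((p m).eval z) * q m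
  have hQ : ∀ y, Q.eval y = ∑ m, (p m).eval z * (q m).eval y := fun y => by
    simp [Q, eval_finsetSum]
  suffices r = Q by rw [hGr b hzb, this, hQ]
  refine eq_of_infinite_eval_eq r Q ((toFinite ({0, z} ∪ range w)).infinite_compl.mono ?_)
  intro y hy
  simp only [mem_compl_iff, mem_union, mem_insert_iff, mem_singleton_iff, not_or] at hy
  have hzy : (z, y) ∈ Y₂ := ⟨Ne.symm hy.1.2, hzb.2.1, hy.1.1⟩
  rw [mem_ofPred_eq, ← hGr y hzy, hgen z y hzy hy.2, hQ]

lemma sum_eval_mul_eval_eq_sum_coeff {R ι : Type*} [CommSemiring R] (s : Finset ι) {D : ℕ}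
    (p q : ι → R[X]) (hp : ∀ i, (p i).natDegree ≤ D) (hq : ∀ i, (q i).natDegree ≤ D) (x y : R) :
    ∑ i ∈ s, (p i).eval x * (q i).eval y =
      ∑ ij ∈ Finset.range (D + 1) ×ˢ Finset.range (D + 1),
        (∑ i ∈ s, (p i).coeff ij.1 * (q i).coeff ij.2) * x ^ ij.1 * y ^ ij.2 := by
  simp_rw [eval_eq_sum_range' (Nat.lt_succ_of_le (hp _)),
    eval_eq_sum_range' (Nat.lt_succ_of_le (hq _)), Finset.sum_mul_sum, Finset.sum_mul]
  rw [Finset.sum_product, Finset.sum_comm]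
  refine Finset.sum_congr rfl fun i _ => ?_
  rw [Finset.sum_comm]
  exact Finset.sum_congr rfl fun j _ => Finset.sum_congr rfl fun m _ => by ring

lemma exists_laurent_of_mul_pow_eq_sum {μ : ℂ → ℂ → ℂ} {n N : ℕ} {E : ℕ × ℕ → ℂ}
    (h : ∀ x ∈ Y₂, (x.1 * x.2 * (x.1 - x.2)) ^ n * μ x.1 x.2 =
      ∑ ij ∈ Finset.range N ×ˢ Finset.range N, E ij * x.1 ^ ij.1 * x.2 ^ ij.2) :
    ∃ (S : Finset (ℤ × ℤ × ℤ)) (c : ℤ × ℤ × ℤ → ℂ), ∀ z₁ z₂ : ℂ, z₁ ≠ z₂ → z₁ ≠ 0 → z₂ ≠ 0 →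
      μ z₁ z₂ = ∑ t ∈ S, c t * z₁ ^ t.1 * z₂ ^ t.2.1 * (z₁ - z₂) ^ t.2.2 := by
  set e : ℕ × ℕ → ℤ × ℤ × ℤ := fun ij => ((ij.1 : ℤ) - n, (ij.2 : ℤ) - n, -(n : ℤ))
  have he : Function.Injective e := fun ij ij' hij => by
    simp only [e, Prod.mk.injEq] at hij
    ext <;> omega
  refine ⟨(Finset.range N ×ˢ Finset.range N).image e,
    fun t => E ((t.1 + n).toNat, (t.2.1 + n).toNat), fun z₁ z₂ h12 h1 h2 => ?_⟩
  have hm : (z₁ * z₂ * (z₁ - z₂)) ^ n ≠ 0 := by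
    have := sub_ne_zero.2 h12
    positivity
  rw [Finset.sum_image fun _ _ _ _ hij => he hij, ← mul_right_inj' hm, h (z₁, z₂) ⟨h12, h1, h2⟩,
    Finset.mul_sum]
  refine Finset.sum_congr rfl fun ij _ => ?_
  simp only [e, sub_add_cancel, Int.toNat_natCast, zpow_sub₀ h1, zpow_sub₀ h2, zpow_neg,
    zpow_natCast]
  field_simp
  rw [mul_pow, mul_pow]
  ring

/-- If `μ ∈ GCor₂` satisfies `∂μ/∂z̄₁ = ∂μ/∂z̄₂ = 0` (i.e. `μ` is
holomorphic on `Y₂`), then `μ ∈ ℂ[z₁^±, z₂^±, (z₁-z₂)^±]`. -/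
theorem holomorphic_GCor2_is_laurent (μ : ℂ → ℂ → ℂ) (hμ : MemGCor2 μ)
    (hol : DifferentiableOn ℂ (fun p : ℂ × ℂ => μ p.1 p.2)
      {p : ℂ × ℂ | p.1 ≠ p.2 ∧ p.1 ≠ 0 ∧ p.2 ≠ 0}) :
    ∃ (S : Finset (ℤ × ℤ × ℤ)) (c : ℤ × ℤ × ℤ → ℂ),
      ∀ z₁ z₂ : ℂ, z₁ ≠ z₂ → z₁ ≠ 0 → z₂ ≠ 0 →
        μ z₁ z₂ = ∑ t ∈ S, c t * z₁ ^ t.1 * z₂ ^ t.2.1 * (z₁ - z₂) ^ t.2.2 := by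
  obtain ⟨n, K, hbound⟩ := hμ.moderateGrowth.exists_norm_mul_pow_le
  set G : ℂ × ℂ → ℂ := fun p => (p.1 * p.2 * (p.1 - p.2)) ^ n * μ p.1 p.2
  have hG : DifferentiableOn ℂ G Y₂ :=
    (by fun_prop : Differentiable ℂ fun p : ℂ × ℂ => (p.1 * p.2 * (p.1 - p.2)) ^ n)
      |>.differentiableOn.mul hol
  obtain ⟨h₁, h₂⟩ := exists_polynomial_slices_of_differentiableOn_Y₂ hG hbound
  obtain ⟨p, q, hp, hq, hpq⟩ := exists_sum_eval_mul_eval_of_slices (G := G) h₁ h₂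
  exact exists_laurent_of_mul_pow_eq_sum fun x hx =>
    (hpq x hx).trans (sum_eval_mul_eval_eq_sum_coeff _ p q hp hq _ _)
end
end

section
/- A unital commutative associative algebra object in the braided monoidal category of H-graded complex vector spaces with braiding B(v_α ⊗ w_β) = e^{π i (α,β)} w_β ⊗ v_α is the same thing as an AH pair: a unital associative H-graded algebra A = ⊕_{α∈H} A^α with 1 ∈ A^0, A^α A^β ⊆ A^{α+β}, such that A^α A^β ≠ 0 implies (α,β) ∈ ℤ, and vw = (−1)^{(α,β)} wv for v ∈ A^α, w ∈ A^β. -/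
/-!
Homogeneous elements satisfy `v w = c (w v)` and `w v = c (v w)` with the same phase
`c = e^{πi(α,β)}`, by symmetry of the form. If `v w ≠ 0` this forces `c² = 1`, i.e.
`(α,β) ∈ ℤ`, and then `c = (-1)^{(α,β)}`. Conversely, when `(α,β) ∉ ℤ` the AH condition
kills both `v w` and `w v`, so the braided commutativity holds trivially.
-/

open Complex Real

lemma exp_pi_mul_I_mul_intCast (m : ℤ) : exp (π * I * m) = (-1) ^ m := by
  rw [mul_comm, exp_int_mul, exp_pi_mul_I]

lemma exists_int_eq_of_exp_pi_mul_I_mul_self_eq_one {r : ℝ}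
    (h : exp (π * I * r) * exp (π * I * r) = 1) : ∃ m : ℤ, r = m := by
  rw [← Complex.exp_add, Complex.exp_eq_one_iff] at h
  obtain ⟨m, hm⟩ := h
  refine ⟨m, ?_⟩
  have h2πI : 2 * (π : ℂ) * I ≠ 0 := by simp [Real.pi_ne_zero, I_ne_zero]
  have : (r : ℂ) = m := mul_left_cancel₀ h2πI (by linear_combination hm)
  exact_mod_cast this

lemma mul_self_eq_one_of_eq_smul_of_eq_smul {K M : Type*} [DivisionRing K] [AddCommGroup M]
    [Module K M] {c : K} {x y : M} (hx : x = c • y) (hy : y = c • x) (hx₀ : x ≠ 0) :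
    c * c = 1 := by
  have : (c * c - 1) • x = 0 := by rw [sub_smul, one_smul, mul_smul, ← hy, ← hx, sub_self]
  exact sub_eq_zero.mp ((smul_eq_zero.mp this).resolve_right hx₀)

theorem commutative_algebra_object_iff_AH_pair_general
    (H : Type) [AddCommGroup H] [Module ℝ H]
    (B : H →ₗ[ℝ] H →ₗ[ℝ] ℝ)
    (hsymm : ∀ α β : H, B α β = B β α)
    (A : Type) [Ring A] [Algebra ℂ A]
    (grade : H → Submodule ℂ A) :
    (∀ (α β : H) (v w : A), v ∈ grade α → w ∈ grade β →
      v * w = Complex.exp ((Real.pi : ℂ) * Complex.I * ((B α β : ℝ) : ℂ)) • (w * v))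
    ↔
    ((∀ (α β : H) (v w : A), v ∈ grade α → w ∈ grade β → v * w ≠ 0 →
        ∃ m : ℤ, B α β = (m : ℝ)) ∧
     (∀ (α β : H) (m : ℤ), B α β = (m : ℝ) →
        ∀ (v w : A), v ∈ grade α → w ∈ grade β →
          v * w = ((-1 : ℂ) ^ m) • (w * v))) := by
  constructor
  · intro hcomm
    refine ⟨fun α β v w hv hw hvw ↦ ?_, fun α β m hm v w hv hw ↦ ?_⟩
    · have hwv := hcomm β α w v hw hv
      rw [hsymm β α] at hwv
      exact exists_int_eq_of_exp_pi_mul_I_mul_self_eq_one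
        (mul_self_eq_one_of_eq_smul_of_eq_smul (hcomm α β v w hv hw) hwv hvw)
    · simpa only [hm, ofReal_intCast, exp_pi_mul_I_mul_intCast] using hcomm α β v w hv hw
  · rintro ⟨hint, hsign⟩ α β v w hv hw
    by_cases hαβ : ∃ m : ℤ, B α β = m
    · obtain ⟨m, hm⟩ := hαβ
      rw [hm, ofReal_intCast, exp_pi_mul_I_mul_intCast]
      exact hsign α β m hm v w hv hw
    · have hvw : v * w = 0 := by_contra fun h ↦ hαβ (hint α β v w hv hw h)
      have hwv : w * v = 0 := by_contra fun h ↦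
        hαβ (by simpa only [hsymm] using hint β α w v hw hv h)
      rw [hvw, hwv, smul_zero]

/-- Let `H` be a finite-dimensional real vector space with a
non-degenerate symmetric bilinear form `B`, and let `A` be a unital associative
`H`-graded `ℂ`-algebra (`1 ∈ A⁰`, `A^α A^β ⊆ A^{α+β}`).  Then `A` is a *commutative*
algebra object in the braided monoidal category of `H`-graded vector spaces with
braiding `B(v_α ⊗ w_β) = e^{πi(α,β)} w_β ⊗ v_α` — i.e. `v·w = e^{πi(α,β)} (w·v)` for
homogeneous `v, w` — if and only if `A` is an AH pair: `A^α A^β ≠ 0` implies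
`(α,β) ∈ ℤ`, and `v·w = (-1)^{(α,β)} (w·v)` for homogeneous `v, w`. -/
theorem commutative_algebra_object_iff_AH_pair
    (H : Type) [AddCommGroup H] [Module ℝ H] [FiniteDimensional ℝ H] [DecidableEq H]
    (B : H →ₗ[ℝ] H →ₗ[ℝ] ℝ)
    (hsymm : ∀ α β : H, B α β = B β α)
    (hnondeg : ∀ α : H, (∀ β : H, B α β = 0) → α = 0)
    (A : Type) [Ring A] [Algebra ℂ A]
    (grade : H → Submodule ℂ A)
    (hinternal : DirectSum.IsInternal grade)
    (hone : (1 : A) ∈ grade 0)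
    (hmul : ∀ (α β : H), ∀ v ∈ grade α, ∀ w ∈ grade β, v * w ∈ grade (α + β)) :
    (∀ (α β : H) (v w : A), v ∈ grade α → w ∈ grade β →
      v * w = Complex.exp ((Real.pi : ℂ) * Complex.I * ((B α β : ℝ) : ℂ)) • (w * v))
    ↔
    ((∀ (α β : H) (v w : A), v ∈ grade α → w ∈ grade β → v * w ≠ 0 →
        ∃ m : ℤ, B α β = (m : ℝ)) ∧
     (∀ (α β : H) (m : ℤ), B α β = (m : ℝ) →
        ∀ (v w : A), v ∈ grade α → w ∈ grade β →
          v * w = ((-1 : ℂ) ^ m) • (w * v))) :=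
  commutative_algebra_object_iff_AH_pair_general H B hsymm A grade
end
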